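/- Let T > 0, ℓ > 0, s > 0, f_c > 0, ε > 0, g > 0, N₀ > 0, B > 0, q_r, q_s ≥ 0, q_c > 0, R_max ≥ 1, and suppose d(R) = T/ℓ − 1/s − (e^{εR} − e^{ε})/f_c > 0 for all R ∈ [1, R_max]. Define E(R) = (q_r + q_s + q_c(e^{εR} − e^{ε}))·ℓ + (ℓ·d(R)/g)·f(1/(d(R)·R)) and z(R) = (q_c − G(1/(d(R)R))/(g·f_c))·ε e^{εR} − f′(1/(d(R)R))/(g·R²). If R̂ ∈ [1, R_max] satisfies z(R̂) = 0, then R̂ minimizes E over [1, R_max]. (Proposition 4, part 2: the optimal lossless compression ratio is the root of z, clamped to [1, R_max].) -/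

import Mathlib

/-- f(x) = N₀ (2^{x/B} − 1). -/
noncomputable def fTx (N₀ B x : ℝ) : ℝ := N₀ * ((2 : ℝ) ^ (x / B) - 1)

/-- f′(x) = (N₀ ln 2 / B)·2^{x/B}. -/
noncomputable def fTx' (N₀ B x : ℝ) : ℝ := N₀ * Real.log 2 / B * (2 : ℝ) ^ (x / B)

/-- G(x) = f(x) − x f′(x). -/
noncomputable def GG (N₀ B x : ℝ) : ℝ := fTx N₀ B x - x * fTx' N₀ B x

/-- d(R) = T/ℓ − 1/s − (e^{εR} − e^{ε})/f_c. -/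
noncomputable def dd (T ℓ s fc ε R : ℝ) : ℝ :=
  T / ℓ - 1 / s - (Real.exp (ε * R) - Real.exp ε) / fc

/-- z(R) = (q_c − G(1/(d(R)R))/(g f_c))·ε e^{εR} − f′(1/(d(R)R))/(g R²). -/
noncomputable def zP1B (T ℓ s fc ε g N₀ B qc R : ℝ) : ℝ :=
  (qc - GG N₀ B (1 / (dd T ℓ s fc ε R * R)) / (g * fc)) * (ε * Real.exp (ε * R))
    - fTx' N₀ B (1 / (dd T ℓ s fc ε R * R)) / (g * R ^ 2)

/-- E(R): total sensor energy in P1-B, at transmission duration t = ℓ·d(R). -/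
noncomputable def EP1B (T ℓ s fc ε g N₀ B qr qs qc R : ℝ) : ℝ :=
  (qr + qs + qc * (Real.exp (ε * R) - Real.exp ε)) * ℓ
    + (ℓ * dd T ℓ s fc ε R / g) * fTx N₀ B (1 / (dd T ℓ s fc ε R * R))

/-! E is convex on `[1, R_max]` and `E′ = ℓ·z`, so a root of `z` is a minimiser.
Apart from the convex compression term `q_c ℓ e^{εR}`, `E` is `(ℓ/g)·d·f((1/R)/d)`: the perspective
`(x, t) ↦ t f(x/t)` of the convex increasing function `f` with `f(0) = 0`, evaluated at the convex
function `x = 1/R` and the positive concave function `t = d`. The perspective is jointly convex,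
nondecreasing in `x` and nonincreasing in `t`, so the composite is convex. -/

open Set Real

section Perspective

variable {φ : ℝ → ℝ}

theorem ConvexOn.perspective (hφ : ConvexOn ℝ univ φ) :
    ConvexOn ℝ (univ ×ˢ Ioi 0) fun p : ℝ × ℝ => p.2 * φ (p.1 / p.2) := by
  refine ⟨convex_univ.prod (convex_Ioi 0), ?_⟩
  rintro ⟨x₁, t₁⟩ ⟨-, ht₁ : 0 < t₁⟩ ⟨x₂, t₂⟩ ⟨-, ht₂ : 0 < t₂⟩ μ ν hμ hν hμν
  simp only [Prod.smul_mk, Prod.mk_add_mk, smul_eq_mul]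
  set τ := μ * t₁ + ν * t₂
  have hτ : 0 < τ := convex_Ioi (0 : ℝ) ht₁ ht₂ hμ hν hμν
  -- `(μ x₁ + ν x₂) / τ` is the mean of `x₁ / t₁` and `x₂ / t₂` with weights `μ t₁ / τ`, `ν t₂ / τ`
  have key := hφ.2 (mem_univ (x₁ / t₁)) (mem_univ (x₂ / t₂))
    (show 0 ≤ μ * t₁ / τ by positivity) (show 0 ≤ ν * t₂ / τ by positivity)
    (by rw [← add_div, div_self hτ.ne'])
  simp only [smul_eq_mul] at key
  calc τ * φ ((μ * x₁ + ν * x₂) / τ)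
      = τ * φ (μ * t₁ / τ * (x₁ / t₁) + ν * t₂ / τ * (x₂ / t₂)) := by
        congr 2; field_simp
    _ ≤ τ * (μ * t₁ / τ * φ (x₁ / t₁) + ν * t₂ / τ * φ (x₂ / t₂)) :=
        mul_le_mul_of_nonneg_left key hτ.le
    _ = μ * (t₁ * φ (x₁ / t₁)) + ν * (t₂ * φ (x₂ / t₂)) := by
        field_simp

theorem ConvexOn.antitoneOn_perspective (hφ : ConvexOn ℝ univ φ) (hφ₀ : φ 0 ≤ 0) (x : ℝ) :
    AntitoneOn (fun t => t * φ (x / t)) (Ioi 0) := by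
  intro t (ht : 0 < t) t' (ht' : 0 < t') htt'
  have key := hφ.2 (mem_univ (x / t)) (mem_univ 0) (show 0 ≤ t / t' by positivity)
    (sub_nonneg.2 ((div_le_one ht').2 htt')) (add_sub_cancel _ _)
  simp only [smul_eq_mul, mul_zero, add_zero] at key
  have hx : t / t' * (x / t) = x / t' := by field_simp
  rw [hx] at key
  show t' * φ (x / t') ≤ t * φ (x / t)
  calc t' * φ (x / t') ≤ t' * (t / t' * φ (x / t) + (1 - t / t') * φ 0) :=
        mul_le_mul_of_nonneg_left key ht'.le
    _ ≤ t' * (t / t' * φ (x / t)) := by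
        gcongr
        exact add_le_of_nonpos_right
          (mul_nonpos_of_nonneg_of_nonpos (sub_nonneg.2 ((div_le_one ht').2 htt')) hφ₀)
    _ = t * φ (x / t) := by field_simp

theorem ConvexOn.perspective_comp {E : Type*} [AddCommGroup E] [Module ℝ E] {S : Set E}
    (hφ : ConvexOn ℝ univ φ) (hφm : Monotone φ) (hφ₀ : φ 0 ≤ 0) {x t : E → ℝ}
    (hx : ConvexOn ℝ S x) (ht : ConcaveOn ℝ S t) (ht₀ : ∀ a ∈ S, 0 < t a) :
    ConvexOn ℝ S fun a => t a * φ (x a / t a) := by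
  refine ⟨hx.1, fun a ha b hb μ ν hμ hν hμν => ?_⟩
  have hm := hx.1 ha hb hμ hν hμν
  have hxm : x (μ • a + ν • b) ≤ μ * x a + ν * x b := hx.2 ha hb hμ hν hμν
  have htm : μ * t a + ν * t b ≤ t (μ • a + ν • b) := ht.2 ha hb hμ hν hμν
  have hτ : 0 < μ * t a + ν * t b := convex_Ioi (0 : ℝ) (ht₀ a ha) (ht₀ b hb) hμ hν hμν
  simp only [smul_eq_mul]
  calc t (μ • a + ν • b) * φ (x (μ • a + ν • b) / t (μ • a + ν • b))
      ≤ t (μ • a + ν • b) * φ ((μ * x a + ν * x b) / t (μ • a + ν • b)) := by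
        gcongr
        · exact (ht₀ _ hm).le
        · exact hφm (div_le_div_of_nonneg_right hxm (ht₀ _ hm).le)
    _ ≤ (μ * t a + ν * t b) * φ ((μ * x a + ν * x b) / (μ * t a + ν * t b)) :=
        hφ.antitoneOn_perspective hφ₀ _ hτ (ht₀ _ hm) htm
    _ ≤ μ * (t a * φ (x a / t a)) + ν * (t b * φ (x b / t b)) := by
        simpa using hφ.perspective.2 (x := (x a, t a)) (y := (x b, t b))
          ⟨mem_univ _, ht₀ a ha⟩ ⟨mem_univ _, ht₀ b hb⟩ hμ hν hμν

end Perspective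

theorem ConvexOn.isMinOn_of_hasDerivAt_eq_zero {S : Set ℝ} {f : ℝ → ℝ} {x : ℝ}
    (hf : ConvexOn ℝ S f) (hx : x ∈ S) (hf' : HasDerivAt f 0 x) : IsMinOn f S x := by
  intro y hy
  show f x ≤ f y
  rcases lt_trichotomy x y with hxy | rfl | hyx
  · have := hf.le_slope_of_hasDerivAt hx hy hxy hf'
    rwa [slope_def_field, le_div_iff₀ (sub_pos.2 hxy), zero_mul, sub_nonneg] at this
  · exact le_rfl
  · have := hf.slope_le_of_hasDerivAt hy hx hyx hf'
    rwa [slope_def_field, div_le_iff₀ (sub_pos.2 hyx), zero_mul, sub_nonpos] at this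

theorem convexOn_exp_mul (c : ℝ) : ConvexOn ℝ univ fun x => exp (c * x) :=
  convexOn_exp.comp_linearMap (LinearMap.mulLeft ℝ c)

section Energy

variable {T ℓ s fc ε g N₀ B qr qs qc : ℝ}

theorem convexOn_fTx (hN₀ : 0 ≤ N₀) (B : ℝ) : ConvexOn ℝ univ (fTx N₀ B) := by
  have hf : fTx N₀ B = fun y => N₀ • exp (log 2 / B * y) + -N₀ := by
    funext y
    rw [fTx, rpow_def_of_pos two_pos, smul_eq_mul]
    ring_nf
  rw [hf]
  exact ((convexOn_exp_mul _).smul hN₀).add_const _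

theorem monotone_fTx (hN₀ : 0 ≤ N₀) (hB : 0 ≤ B) : Monotone (fTx N₀ B) := by
  intro a b hab
  unfold fTx
  gcongr
  norm_num

theorem fTx_zero (N₀ B : ℝ) : fTx N₀ B 0 = 0 := by
  simp [fTx]

theorem hasDerivAt_fTx (N₀ B x : ℝ) : HasDerivAt (fTx N₀ B) (fTx' N₀ B x) x := by
  have h : HasDerivAt (fTx N₀ B) _ x :=
    ((((hasDerivAt_id x).div_const B).const_rpow two_pos).sub_const 1).const_mul N₀
  exact h.congr_deriv (by rw [fTx', id]; ring)

theorem concaveOn_dd (hfc : 0 ≤ fc) : ConcaveOn ℝ univ (dd T ℓ s fc ε) := by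
  have hd : dd T ℓ s fc ε = fun R => -(fc⁻¹ • exp (ε * R)) + (T / ℓ - 1 / s + exp ε / fc) := by
    funext R
    rw [dd, smul_eq_mul]
    ring
  rw [hd]
  exact ((convexOn_exp_mul ε).smul (inv_nonneg.2 hfc)).neg.add_const _

theorem hasDerivAt_dd (R : ℝ) :
    HasDerivAt (dd T ℓ s fc ε) (-(ε * exp (ε * R)) / fc) R := by
  have h : HasDerivAt (dd T ℓ s fc ε) _ R :=
    (((((hasDerivAt_id R).const_mul ε).exp).sub_const (exp ε)).div_const fc).const_sub
      (T / ℓ - 1 / s)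
  exact h.congr_deriv (by rw [id]; ring)

theorem convexOn_EP1B (hℓ : 0 ≤ ℓ) (hfc : 0 ≤ fc) (hg : 0 ≤ g) (hN₀ : 0 ≤ N₀) (hB : 0 ≤ B)
    (hqc : 0 ≤ qc) {S : Set ℝ} (hS : Convex ℝ S) (hS₀ : S ⊆ Ioi 0)
    (hd : ∀ R ∈ S, 0 < dd T ℓ s fc ε R) :
    ConvexOn ℝ S (EP1B T ℓ s fc ε g N₀ B qr qs qc) := by
  have hinv : ConvexOn ℝ S fun R : ℝ => R⁻¹ := by
    simpa using (convexOn_zpow (𝕜 := ℝ) (-1)).subset hS₀ hS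
  have htx := (convexOn_fTx hN₀ B).perspective_comp (monotone_fTx hN₀ hB) (fTx_zero N₀ B).le
    hinv ((concaveOn_dd hfc).subset (subset_univ S) hS) hd
  have hcomp := ((convexOn_exp_mul ε).subset (subset_univ S) hS).smul (mul_nonneg hqc hℓ)
  refine ((hcomp.add (htx.smul (div_nonneg hℓ hg))).add_const
    ((qr + qs - qc * exp ε) * ℓ)).congr fun R _ => ?_
  have hdiv : R⁻¹ / dd T ℓ s fc ε R = 1 / (dd T ℓ s fc ε R * R) := by ring
  simp only [EP1B, smul_eq_mul, Pi.add_apply, hdiv]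
  ring

theorem hasDerivAt_EP1B {R : ℝ} (hdR : dd T ℓ s fc ε R ≠ 0) (hR : R ≠ 0) :
    HasDerivAt (EP1B T ℓ s fc ε g N₀ B qr qs qc) (ℓ * zP1B T ℓ s fc ε g N₀ B qc R) R := by
  have hexp : HasDerivAt (fun x => exp (ε * x)) (exp (ε * R) * (ε * 1)) R :=
    ((hasDerivAt_id R).const_mul ε).exp
  have hw : HasDerivAt (fun x => dd T ℓ s fc ε x * x) _ R :=
    (hasDerivAt_dd R).mul (hasDerivAt_id' R)
  have hu : HasDerivAt (fun x => 1 / (dd T ℓ s fc ε x * x)) _ R :=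
    (hasDerivAt_const R (1 : ℝ)).div hw (mul_ne_zero hdR hR)
  have H : HasDerivAt (EP1B T ℓ s fc ε g N₀ B qr qs qc) _ R :=
    ((((hexp.sub_const (exp ε)).const_mul qc).const_add (qr + qs)).mul_const ℓ).add
      ((((hasDerivAt_dd R).const_mul ℓ).div_const g).mul ((hasDerivAt_fTx N₀ B _).comp R hu))
  refine H.congr_deriv ?_
  simp only [zP1B, GG]
  field_simp
  ring

end Energy

theorem z_root_minimizes_energy_general
    (T ℓ s fc ε g N₀ B qr qs qc Rmax : ℝ)
    (hℓ : 0 < ℓ) (hfc : 0 < fc)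
    (hg : 0 < g) (hN₀ : 0 < N₀) (hB : 0 < B)
    (hqc : 0 < qc)
    (hd : ∀ R ∈ Set.Icc (1 : ℝ) Rmax, 0 < dd T ℓ s fc ε R)
    (Rhat : ℝ) (hRhat : Rhat ∈ Set.Icc (1 : ℝ) Rmax)
    (hroot : zP1B T ℓ s fc ε g N₀ B qc Rhat = 0) :
    IsMinOn (EP1B T ℓ s fc ε g N₀ B qr qs qc) (Set.Icc 1 Rmax) Rhat := by
  have hpos : Icc (1 : ℝ) Rmax ⊆ Ioi 0 := fun R hR => one_pos.trans_le hR.1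
  refine (convexOn_EP1B hℓ.le hfc.le hg.le hN₀.le hB.le hqc.le (convex_Icc 1 Rmax) hpos
    hd).isMinOn_of_hasDerivAt_eq_zero hRhat ?_
  exact (hasDerivAt_EP1B (hd Rhat hRhat).ne' (hpos hRhat).ne').congr_deriv
    (by rw [hroot, mul_zero])

/-- Proposition 4, part 2: any root R̂ ∈ [1, R_max] of the
stationarity function z minimizes the total sensor energy E over [1, R_max]. -/
theorem z_root_minimizes_energy
    (T ℓ s fc ε g N₀ B qr qs qc Rmax : ℝ)
    (hT : 0 < T) (hℓ : 0 < ℓ) (hs : 0 < s) (hfc : 0 < fc) (hε : 0 < ε)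
    (hg : 0 < g) (hN₀ : 0 < N₀) (hB : 0 < B)
    (hqr : 0 ≤ qr) (hqs : 0 ≤ qs) (hqc : 0 < qc) (hRmax : 1 ≤ Rmax)
    (hd : ∀ R ∈ Set.Icc (1 : ℝ) Rmax, 0 < dd T ℓ s fc ε R)
    (Rhat : ℝ) (hRhat : Rhat ∈ Set.Icc (1 : ℝ) Rmax)
    (hroot : zP1B T ℓ s fc ε g N₀ B qc Rhat = 0) :
    IsMinOn (EP1B T ℓ s fc ε g N₀ B qr qs qc) (Set.Icc 1 Rmax) Rhat :=
  z_root_minimizes_energy_general T ℓ s fc ε g N₀ B qr qs qc Rmax hℓ hfc hg hN₀ hB hqc hd Rhat hRhat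
    hroot
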